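/- arXiv:2601.10915 — 2 statements merged into one kernel-verified Lean document; each statement's English description precedes it below -/
import Mathlib

section
/- Let P be a probability measure on a measurable space X and let f : X → ℝ be measurable with E_P[f] finite and E_P[exp(−f)] finite. Define the Gibbs measure Q* by dQ*/dP = exp(−f)/E_P[exp(−f)]. Then for every probability measure Q on X with E_Q[exp(f)] < ∞, one has log E_Q[exp(f)] + D(P ‖ Q) ≥ E_P[f], and equality holds for Q = Q*; in particular, the infimum of log E_Q[exp(f)] + D(P ‖ Q) over probability measures Q equals E_P[f] and is attained at the Gibbs measure Q*. -/
/-!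
Tilting `Q` by `f` gives the probability measure `Q_f` with `dQ_f/dQ = exp f / E_Q[exp f]`, and
`D(P‖Q_f) = D(P‖Q) - E_P[f] + log E_Q[exp f]`; nonnegativity of `D(P‖Q_f)` is the inequality.
The Gibbs measure is `P` tilted by `-f`, for which both sides can be computed exactly.
-/

open MeasureTheory ProbabilityTheory
open scoped ENNReal NNReal

open scoped Classical in
/-- Kullback–Leibler divergence `D(P‖Q)`, valued in the extended reals:
it equals `∫ log (dP/dQ) dP` when `P ≪ Q` and this log-likelihood ratio is
integrable, and `+∞` otherwise. -/
noncomputable def klDiv {X : Type*} [MeasurableSpace X] (P Q : Measure X) : EReal :=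
  if P ≪ Q ∧ Integrable (llr P Q) P then ((∫ x, llr P Q x ∂P : ℝ) : EReal) else ⊤

/-- The Gibbs measure `Q*` with density `dQ*/dP = exp (-f) / E_P[exp (-f)]`. -/
noncomputable def gibbsMeasure {X : Type*} [MeasurableSpace X] (P : Measure X) (f : X → ℝ) :
    Measure X :=
  P.withDensity fun x => ENNReal.ofReal (Real.exp (-f x) / ∫ y, Real.exp (-f y) ∂P)

section Gibbs

variable {X : Type*} [MeasurableSpace X] {P Q : Measure X} {f : X → ℝ}

lemma integral_llr_nonneg [IsProbabilityMeasure P] [IsProbabilityMeasure Q] (hPQ : P ≪ Q)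
    (h_int : Integrable (llr P Q) P) : 0 ≤ ∫ x, llr P Q x ∂P := by
  simpa using InformationTheory.integral_llr_add_sub_measure_univ_nonneg hPQ h_int

lemma integral_le_log_integral_exp_add_integral_llr [IsProbabilityMeasure P]
    [IsProbabilityMeasure Q] (hPQ : P ≪ Q) (h_int : Integrable (llr P Q) P)
    (hfP : Integrable f P) (hfQ : Integrable (fun x => Real.exp (f x)) Q) :
    ∫ x, f x ∂P ≤ Real.log (∫ x, Real.exp (f x) ∂Q) + ∫ x, llr P Q x ∂P := by
  have : IsProbabilityMeasure (Q.tilted f) := isProbabilityMeasure_tilted hfQ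
  have h_nonneg := integral_llr_nonneg (hPQ.trans (absolutelyContinuous_tilted hfQ))
    (integrable_llr_tilted_right hPQ hfP h_int hfQ)
  rw [integral_llr_tilted_right hPQ hfP hfQ h_int] at h_nonneg
  linarith

lemma integral_le_log_integral_exp_add_klDiv [IsProbabilityMeasure P] [IsProbabilityMeasure Q]
    (hfP : Integrable f P) (hfQ : Integrable (fun x => Real.exp (f x)) Q) :
    ((∫ x, f x ∂P : ℝ) : EReal) ≤
      ((Real.log (∫ x, Real.exp (f x) ∂Q) : ℝ) : EReal) + klDiv P Q := by
  by_cases h : P ≪ Q ∧ Integrable (llr P Q) P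
  · rw [klDiv, if_pos h, ← EReal.coe_add, EReal.coe_le_coe_iff]
    exact integral_le_log_integral_exp_add_integral_llr h.1 h.2 hfP hfQ
  · rw [klDiv, if_neg h, EReal.add_top_of_ne_bot (EReal.coe_ne_bot _)]
    exact le_top

lemma integrable_llr_self [SigmaFinite P] : Integrable (llr P P) P :=
  integrable_zero _ _ P |>.congr (llr_self P).symm

lemma integral_llr_tilted_self [IsProbabilityMeasure P] (hfP : Integrable f P)
    (hfexp : Integrable (fun x => Real.exp (f x)) P) :
    ∫ x, llr P (P.tilted f) x ∂P =
      -∫ x, f x ∂P + Real.log (∫ x, Real.exp (f x) ∂P) := by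
  rw [integral_llr_tilted_right .rfl hfP hfexp integrable_llr_self,
    integral_congr_ae (llr_self P), Pi.zero_def, integral_zero, zero_sub]

lemma klDiv_gibbsMeasure [IsProbabilityMeasure P] (hfP : Integrable f P)
    (hexp : Integrable (fun x => Real.exp (-f x)) P) :
    klDiv P (gibbsMeasure P f) =
      ((∫ x, f x ∂P + Real.log (∫ x, Real.exp (-f x) ∂P) : ℝ) : EReal) := by
  have h_ac : P ≪ P.tilted (fun x => -f x) := absolutelyContinuous_tilted hexp
  have h_int : Integrable (llr P (P.tilted fun x => -f x)) P :=
    integrable_llr_tilted_right .rfl hfP.neg integrable_llr_self hexp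
  rw [gibbsMeasure, ← Measure.tilted, klDiv, if_pos ⟨h_ac, h_int⟩,
    integral_llr_tilted_self (f := fun x => -f x) hfP.neg hexp]
  simp [integral_neg]

lemma integral_exp_gibbsMeasure [IsProbabilityMeasure P] :
    ∫ x, Real.exp (f x) ∂(gibbsMeasure P f) = (∫ x, Real.exp (-f x) ∂P)⁻¹ := by
  rw [gibbsMeasure, ← Measure.tilted, integral_exp_tilted]
  simp

end Gibbs

theorem gibbs_variational_principle_general
    {X : Type*} [MeasurableSpace X] (P : Measure X) [IsProbabilityMeasure P]
    (f : X → ℝ) (hfint : Integrable f P)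
    (hexpint : Integrable (fun x => Real.exp (-f x)) P) :
    (∀ Q : Measure X, IsProbabilityMeasure Q →
        Integrable (fun x => Real.exp (f x)) Q →
        ((∫ x, f x ∂P : ℝ) : EReal) ≤
          ((Real.log (∫ x, Real.exp (f x) ∂Q) : ℝ) : EReal) + klDiv P Q) ∧
      ((Real.log (∫ x, Real.exp (f x) ∂(gibbsMeasure P f)) : ℝ) : EReal) +
          klDiv P (gibbsMeasure P f) =
        ((∫ x, f x ∂P : ℝ) : EReal) := by
  refine ⟨fun Q _ hfQ => integral_le_log_integral_exp_add_klDiv hfint hfQ, ?_⟩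
  rw [integral_exp_gibbsMeasure, klDiv_gibbsMeasure hfint hexpint, ← EReal.coe_add,
    Real.log_inv]
  congr 1
  ring

/-- **Gibbs variational principle.** For every probability measure `Q` with
`E_Q[exp f] < ∞` one has `log E_Q[exp f] + D(P‖Q) ≥ E_P[f]`, with equality at the
Gibbs measure `Q*` with `dQ*/dP = exp (-f)/E_P[exp (-f)]`; in particular the infimum
of `log E_Q[exp f] + D(P‖Q)` over probability measures `Q` equals `E_P[f]` and is
attained at `Q*`. -/
theorem gibbs_variational_principle
    {X : Type*} [MeasurableSpace X] (P : Measure X) [IsProbabilityMeasure P]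
    (f : X → ℝ) (hfmeas : Measurable f) (hfint : Integrable f P)
    (hexpint : Integrable (fun x => Real.exp (-f x)) P) :
    (∀ Q : Measure X, IsProbabilityMeasure Q →
        Integrable (fun x => Real.exp (f x)) Q →
        ((∫ x, f x ∂P : ℝ) : EReal) ≤
          ((Real.log (∫ x, Real.exp (f x) ∂Q) : ℝ) : EReal) + klDiv P Q) ∧
      ((Real.log (∫ x, Real.exp (f x) ∂(gibbsMeasure P f)) : ℝ) : EReal) +
          klDiv P (gibbsMeasure P f) =
        ((∫ x, f x ∂P : ℝ) : EReal) :=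
  gibbs_variational_principle_general P f hfint hexpint
end

section
/- For α > 0, the function f(v) = α²/(π·(α² + ‖v‖₂²)²) is a probability density on ℝ², and its differential entropy −∫_{ℝ²} f(v)·log f(v) dv equals log(π·e²·α²). -/
/-!
The density depends only on `r = ‖v‖`, so in polar coordinates every integral over `ℝ²` becomes
`2π ∫₀^∞ r g(r) dr`. Writing `a = α²`, we have `-log f = log (π a) + 2 log (1 + r² / a)`, and both
`∫₀^∞ r / (a + r²)² dr` and `∫₀^∞ r log (1 + r² / a) / (a + r²)² dr` equal `1 / (2a)`, with the
explicit antiderivatives `-1 / (2 (a + r²))` and `-(1 + log (1 + r² / a)) / (2 (a + r²))`.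
Hence the mass is `2π · (a / π) · 1 / (2a) = 1` and the entropy is `log (π a) + 2`.
-/

open MeasureTheory Filter Set Topology
open scoped Real

theorem integral_fun_norm_euclideanSpace_fin_two (g : ℝ → ℝ) :
    ∫ v : EuclideanSpace ℝ (Fin 2), g ‖v‖ = 2 * π * ∫ r in Ioi 0, r * g r := by
  have hball : volume.real (Metric.ball (0 : EuclideanSpace ℝ (Fin 2)) 1) = π := by
    rw [measureReal_def, EuclideanSpace.volume_ball]
    norm_num [Real.Gamma_two, Real.pi_nonneg]
  rw [integral_fun_norm_addHaar volume g, hball, finrank_euclideanSpace_fin]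
  norm_num [mul_assoc]

lemma tendsto_const_add_sq_atTop (a : ℝ) : Tendsto (fun r : ℝ => a + r ^ 2) atTop atTop :=
  tendsto_atTop_add_const_left _ a (tendsto_pow_atTop two_ne_zero)

lemma hasDerivAt_const_add_sq (a r : ℝ) : HasDerivAt (fun r : ℝ => a + r ^ 2) (2 * r) r := by
  simpa using (hasDerivAt_pow 2 r).const_add a

lemma tendsto_neg_inv_two_mul_add_sq (a : ℝ) :
    Tendsto (fun r : ℝ => -(2 * (a + r ^ 2))⁻¹) atTop (𝓝 0) := by
  simpa using (tendsto_inv_atTop_zero.comp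
    ((tendsto_const_add_sq_atTop a).const_mul_atTop two_pos)).neg

lemma tendsto_log_div_two_mul_add_sq (a : ℝ) :
    Tendsto (fun r : ℝ => (Real.log a - Real.log (a + r ^ 2) - 1) / (2 * (a + r ^ 2)))
      atTop (𝓝 0) := by
  suffices Tendsto (fun t : ℝ => (Real.log a - 1) / 2 * t⁻¹ - Real.log t / t / 2)
      atTop (𝓝 0) by
    refine (this.comp (tendsto_const_add_sq_atTop a)).congr fun r => ?_
    simp only [Function.comp]
    field_simp
    ring
  simpa using (tendsto_inv_atTop_zero.const_mul ((Real.log a - 1) / 2)).sub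
    (Real.isLittleO_log_id_atTop.tendsto_div_nhds_zero.div_const 2)

section RadialIntegrals

variable {a : ℝ}

lemma hasDerivAt_neg_inv_two_mul_add_sq (ha : 0 < a) (r : ℝ) :
    HasDerivAt (fun r : ℝ => -(2 * (a + r ^ 2))⁻¹) (r / (a + r ^ 2) ^ 2) r := by
  have hpos : 0 < a + r ^ 2 := by positivity
  refine (((hasDerivAt_const_add_sq a r).const_mul 2).inv (by positivity)).neg.congr_deriv ?_
  field_simp

lemma hasDerivAt_log_div_two_mul_add_sq (ha : 0 < a) (r : ℝ) :
    HasDerivAt (fun r : ℝ => (Real.log a - Real.log (a + r ^ 2) - 1) / (2 * (a + r ^ 2)))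
      (r * (Real.log (a + r ^ 2) - Real.log a) / (a + r ^ 2) ^ 2) r := by
  have hpos : 0 < a + r ^ 2 := by positivity
  have hd := hasDerivAt_const_add_sq a r
  refine ((((hd.log hpos.ne').const_sub (Real.log a)).sub_const 1).div (hd.const_mul 2)
    (by positivity)).congr_deriv ?_
  field_simp
  ring

lemma mul_log_sub_log_div_nonneg (ha : 0 < a) {r : ℝ} (hr : 0 ≤ r) :
    0 ≤ r * (Real.log (a + r ^ 2) - Real.log a) / (a + r ^ 2) ^ 2 := by
  have hlog : Real.log a ≤ Real.log (a + r ^ 2) :=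
    Real.log_le_log ha (le_add_of_nonneg_right (sq_nonneg r))
  exact div_nonneg (mul_nonneg hr (sub_nonneg.mpr hlog)) (sq_nonneg _)

lemma integrableOn_Ioi_div_const_add_sq_sq (ha : 0 < a) :
    IntegrableOn (fun r : ℝ => r / (a + r ^ 2) ^ 2) (Ioi 0) :=
  integrableOn_Ioi_deriv_of_nonneg' (fun r _ => hasDerivAt_neg_inv_two_mul_add_sq ha r)
    (fun _ hr => div_nonneg (le_of_lt hr) (sq_nonneg _)) (tendsto_neg_inv_two_mul_add_sq a)

lemma integral_Ioi_div_const_add_sq_sq (ha : 0 < a) :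
    ∫ r in Ioi 0, r / (a + r ^ 2) ^ 2 = (2 * a)⁻¹ := by
  rw [integral_Ioi_of_hasDerivAt_of_nonneg' (fun r _ => hasDerivAt_neg_inv_two_mul_add_sq ha r)
    (fun _ hr => div_nonneg (le_of_lt hr) (sq_nonneg _)) (tendsto_neg_inv_two_mul_add_sq a)]
  norm_num

lemma integrableOn_Ioi_mul_log_sub_log_div (ha : 0 < a) :
    IntegrableOn (fun r : ℝ => r * (Real.log (a + r ^ 2) - Real.log a) / (a + r ^ 2) ^ 2)
      (Ioi 0) :=
  integrableOn_Ioi_deriv_of_nonneg' (fun r _ => hasDerivAt_log_div_two_mul_add_sq ha r)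
    (fun _ hr => mul_log_sub_log_div_nonneg ha (le_of_lt hr)) (tendsto_log_div_two_mul_add_sq a)

lemma integral_Ioi_mul_log_sub_log_div (ha : 0 < a) :
    ∫ r in Ioi 0, r * (Real.log (a + r ^ 2) - Real.log a) / (a + r ^ 2) ^ 2 = (2 * a)⁻¹ := by
  rw [integral_Ioi_of_hasDerivAt_of_nonneg' (fun r _ => hasDerivAt_log_div_two_mul_add_sq ha r)
    (fun _ hr => mul_log_sub_log_div_nonneg ha (le_of_lt hr)) (tendsto_log_div_two_mul_add_sq a)]
  norm_num [neg_div]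

end RadialIntegrals

/-- Radial profile of the density on `ℂ ≃ ℝ²` of `α Z₁ / Z₂` for independent standard complex
Gaussians `Z₁, Z₂`, with `a = α²`. -/
noncomputable def complexGaussianRatioDensity (a r : ℝ) : ℝ := a / (π * (a + r ^ 2) ^ 2)

lemma mul_complexGaussianRatioDensity (a r : ℝ) :
    r * complexGaussianRatioDensity a r = a / π * (r / (a + r ^ 2) ^ 2) := by
  unfold complexGaussianRatioDensity
  field_simp

section ComplexGaussianRatioDensity

variable {a : ℝ}

lemma log_complexGaussianRatioDensity (ha : 0 < a) (r : ℝ) :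
    Real.log (complexGaussianRatioDensity a r) =
      -Real.log (π * a) - 2 * (Real.log (a + r ^ 2) - Real.log a) := by
  have hpos : 0 < a + r ^ 2 := by positivity
  rw [complexGaussianRatioDensity, Real.log_div ha.ne' (by positivity),
    Real.log_mul Real.pi_ne_zero (by positivity), Real.log_pow, Real.log_mul Real.pi_ne_zero ha.ne']
  push_cast
  ring

lemma integral_Ioi_mul_complexGaussianRatioDensity (ha : 0 < a) :
    ∫ r in Ioi 0, r * complexGaussianRatioDensity a r = (2 * π)⁻¹ := by
  simp_rw [mul_complexGaussianRatioDensity]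
  rw [integral_const_mul, integral_Ioi_div_const_add_sq_sq ha]
  field_simp

lemma integral_Ioi_mul_complexGaussianRatioDensity_mul_log (ha : 0 < a) :
    ∫ r in Ioi 0, r * (complexGaussianRatioDensity a r *
        Real.log (complexGaussianRatioDensity a r)) =
      -Real.log (π * Real.exp 2 * a) / (2 * π) := by
  have hsplit : ∀ r, r * (complexGaussianRatioDensity a r *
        Real.log (complexGaussianRatioDensity a r)) =
      -(a / π * Real.log (π * a)) * (r / (a + r ^ 2) ^ 2) -
        2 * a / π * (r * (Real.log (a + r ^ 2) - Real.log a) / (a + r ^ 2) ^ 2) := fun r => by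
    rw [← mul_assoc, mul_complexGaussianRatioDensity, log_complexGaussianRatioDensity ha]
    ring
  simp_rw [hsplit]
  rw [integral_sub ((integrableOn_Ioi_div_const_add_sq_sq ha).const_mul _)
      ((integrableOn_Ioi_mul_log_sub_log_div ha).const_mul _),
    integral_const_mul, integral_const_mul, integral_Ioi_div_const_add_sq_sq ha,
    integral_Ioi_mul_log_sub_log_div ha, mul_right_comm,
    Real.log_mul (by positivity) (Real.exp_ne_zero 2), Real.log_exp]
  field_simp
  ring

theorem integral_complexGaussianRatioDensity (ha : 0 < a) :
    ∫ v : EuclideanSpace ℝ (Fin 2), complexGaussianRatioDensity a ‖v‖ = 1 := by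
  rw [integral_fun_norm_euclideanSpace_fin_two, integral_Ioi_mul_complexGaussianRatioDensity ha]
  field_simp

theorem integral_complexGaussianRatioDensity_mul_log (ha : 0 < a) :
    ∫ v : EuclideanSpace ℝ (Fin 2), complexGaussianRatioDensity a ‖v‖ *
        Real.log (complexGaussianRatioDensity a ‖v‖) = -Real.log (π * Real.exp 2 * a) := by
  rw [integral_fun_norm_euclideanSpace_fin_two
      (fun r => complexGaussianRatioDensity a r * Real.log (complexGaussianRatioDensity a r)),
    integral_Ioi_mul_complexGaussianRatioDensity_mul_log ha]
  field_simp

end ComplexGaussianRatioDensity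

/-- For `α > 0`, the function `f(v) = α²/(π (α² + ‖v‖₂²)²)` is a probability density
on `ℝ²`, and its differential entropy `-∫ f log f` equals `log (π e² α²)`. -/
theorem density_and_entropy_ratio_complex_gaussians (α : ℝ) (hα : 0 < α) :
    (∀ v : EuclideanSpace ℝ (Fin 2), 0 ≤ α ^ 2 / (π * (α ^ 2 + ‖v‖ ^ 2) ^ 2)) ∧
      (∫ v : EuclideanSpace ℝ (Fin 2), α ^ 2 / (π * (α ^ 2 + ‖v‖ ^ 2) ^ 2)) = 1 ∧
      -(∫ v : EuclideanSpace ℝ (Fin 2),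
          (α ^ 2 / (π * (α ^ 2 + ‖v‖ ^ 2) ^ 2)) *
            Real.log (α ^ 2 / (π * (α ^ 2 + ‖v‖ ^ 2) ^ 2))) =
        Real.log (π * Real.exp 2 * α ^ 2) := by
  have ha : 0 < α ^ 2 := by positivity
  exact ⟨fun v => by positivity, integral_complexGaussianRatioDensity ha,
    neg_eq_iff_eq_neg.mpr (integral_complexGaussianRatioDensity_mul_log ha)⟩
end
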